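/- arXiv:math/0112102 — 5 statements merged into one kernel-verified Lean document; each statement's English description precedes it below -/
import Mathlib

section
/- There is a unique group homomorphism θ : G → ZMod 2 × ZMod 2 with θ(σ) = (0,0), θ(τℓ) = (1,0), θ(τm) = (0,1) (it is well defined because each relator of G has even exponent sum in both τℓ and τm), and an element g of G lies in the subgroup H generated by σ, hℓ, hm if and only if θ(g) = (0,0). Equivalently, a word in σ, τℓ, τm represents an element of H if and only if both its exponent sum in τℓ and its exponent sum in τm are even. -/
def knotRels : Set (FreeGroup (Fin 3)) :=
  {(FreeGroup.of 1 * (FreeGroup.of 0)⁻¹) ^ 2,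
   (FreeGroup.of 2 * FreeGroup.of 0) ^ 2,
   (FreeGroup.of 0) ^ 2 * (FreeGroup.of 1)⁻¹ * (FreeGroup.of 2)⁻¹ *
     FreeGroup.of 1 * FreeGroup.of 2}

abbrev G : Type := PresentedGroup knotRels

def σ : G := PresentedGroup.of 0
def τℓ : G := PresentedGroup.of 1
def τm : G := PresentedGroup.of 2
def hℓ : G := τℓ * σ⁻¹ * τℓ⁻¹
def hm : G := τm * σ * τm⁻¹

def Hsub : Subgroup G := Subgroup.closure {σ, hℓ, hm}

/- ## Auxiliary development -/

lemma mk_rel_eq_one {r : FreeGroup (Fin 3)} (hr : r ∈ knotRels) :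
    PresentedGroup.mk knotRels r = 1 :=
  (QuotientGroup.eq_one_iff r).2 (Subgroup.subset_normalClosure hr)

lemma R1 : (τℓ * σ⁻¹) * (τℓ * σ⁻¹) = 1 := by
  have h := mk_rel_eq_one (show (FreeGroup.of 1 * (FreeGroup.of 0)⁻¹) ^ 2 ∈ knotRels by
    left; rfl)
  simp only [map_pow, map_mul, map_inv, pow_two] at h
  exact h

lemma R2 : (τm * σ) * (τm * σ) = 1 := by
  have h := mk_rel_eq_one (show (FreeGroup.of 2 * FreeGroup.of 0) ^ 2 ∈ knotRels by
    right; left; rfl)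
  simp only [map_pow, map_mul, pow_two] at h
  exact h

lemma R3 : σ * σ * τℓ⁻¹ * τm⁻¹ * τℓ * τm = 1 := by
  have h := mk_rel_eq_one (show (FreeGroup.of 0) ^ 2 * (FreeGroup.of 1)⁻¹ * (FreeGroup.of 2)⁻¹ *
      FreeGroup.of 1 * FreeGroup.of 2 ∈ knotRels by
    right; right; rfl)
  simp only [map_pow, map_mul, map_inv, pow_two] at h
  exact h

lemma e1 : τℓ * σ⁻¹ = σ * τℓ⁻¹ := by
  have h := eq_inv_of_mul_eq_one_left R1
  rw [h]; group

lemma e2 : τm * σ = σ⁻¹ * τm⁻¹ := by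
  have h := eq_inv_of_mul_eq_one_left R2
  rw [h]; group

lemma e3 : τm * τℓ = τℓ * τm * (σ * σ) := by
  rw [show τℓ * τm * (σ * σ) =
      τℓ * τm * (σ * σ * τℓ⁻¹ * τm⁻¹ * τℓ * τm) * τm⁻¹ * τℓ⁻¹ * τm * τℓ from by group, R3]
  group

lemma e3' : τℓ * τm = τm * τℓ * (σ * σ)⁻¹ := by
  rw [e3]; group

lemma e2' : σ * τm = τm⁻¹ * σ⁻¹ := by
  rw [show σ * τm = σ * (τm * σ) * σ⁻¹ from by group, e2]; group

lemma q1 : τℓ * σ * τℓ⁻¹ = (τℓ * τℓ) * σ⁻¹ := by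
  rw [show (τℓ * τℓ) * σ⁻¹ = τℓ * (τℓ * σ⁻¹) from by group, e1]; group

lemma q2 : τℓ⁻¹ * σ * τℓ = σ⁻¹ * (τℓ * τℓ) := by
  rw [show τℓ⁻¹ * σ * τℓ = τℓ⁻¹ * (σ * τℓ⁻¹) * (τℓ * τℓ) from by group, ← e1]; group

lemma q3 : τm * σ * τm⁻¹ = σ⁻¹ * (τm * τm)⁻¹ := by
  rw [show τm * σ * τm⁻¹ = (τm * σ) * τm⁻¹ from by group, e2]; group

lemma q4 : τm⁻¹ * σ * τm = (τm * τm)⁻¹ * σ⁻¹ := by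
  rw [show τm⁻¹ * σ * τm = τm⁻¹ * (σ * τm) from by group, e2']; group

lemma q5 : τℓ⁻¹ * τm * τℓ = τm * (σ * σ) := by
  rw [show τℓ⁻¹ * τm * τℓ = τℓ⁻¹ * (τm * τℓ) from by group, e3]; group

lemma q6 : τm⁻¹ * τℓ * τm = τℓ * (σ * σ)⁻¹ := by
  rw [show τm⁻¹ * τℓ * τm = τm⁻¹ * (τℓ * τm) from by group, e3']; group

lemma e7 : τℓ * τm * τℓ⁻¹ = τm * (((τℓ * τℓ) * σ⁻¹)⁻¹ * ((τℓ * τℓ) * σ⁻¹)⁻¹) := by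
  rw [show τm * (((τℓ * τℓ) * σ⁻¹)⁻¹ * ((τℓ * τℓ) * σ⁻¹)⁻¹) =
      τm * ((τℓ * σ * τℓ⁻¹)⁻¹ * (τℓ * σ * τℓ⁻¹)⁻¹) from by rw [q1], e3']
  group

lemma e8 : τm * τℓ * τm⁻¹ = τℓ * ((σ⁻¹ * (τm * τm)⁻¹) * (σ⁻¹ * (τm * τm)⁻¹)) := by
  rw [show τℓ * ((σ⁻¹ * (τm * τm)⁻¹) * (σ⁻¹ * (τm * τm)⁻¹)) =
      τℓ * ((τm * σ * τm⁻¹) * (τm * σ * τm⁻¹)) from by rw [q3], e3]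
  group

def H0 : Subgroup G := Subgroup.closure {σ, τℓ * τℓ, τm * τm}

lemma m_u : σ ∈ H0 := Subgroup.subset_closure (by left; rfl)
lemma m_a2 : τℓ * τℓ ∈ H0 := Subgroup.subset_closure (by right; left; rfl)
lemma m_b2 : τm * τm ∈ H0 := Subgroup.subset_closure (by right; right; rfl)

lemma m1 : τℓ * σ * τℓ⁻¹ ∈ H0 := by
  rw [q1]; exact mul_mem m_a2 (inv_mem m_u)

lemma m2 : τℓ⁻¹ * σ * τℓ ∈ H0 := by
  rw [q2]; exact mul_mem (inv_mem m_u) m_a2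

lemma m3 : τm * σ * τm⁻¹ ∈ H0 := by
  rw [q3]; exact mul_mem (inv_mem m_u) (inv_mem m_b2)

lemma m4 : τm⁻¹ * σ * τm ∈ H0 := by
  rw [q4]; exact mul_mem (inv_mem m_b2) (inv_mem m_u)

lemma X1 : τℓ⁻¹ * (τm * τm) * τℓ ∈ H0 := by
  have e : τℓ⁻¹ * (τm * τm) * τℓ =
      (τm * τm) * ((τm⁻¹ * σ * τm) * (τm⁻¹ * σ * τm)) * (σ * σ) := by
    rw [show τℓ⁻¹ * (τm * τm) * τℓ = (τℓ⁻¹ * τm * τℓ) * (τℓ⁻¹ * τm * τℓ) from by group, q5]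
    group
  rw [e]; exact mul_mem (mul_mem m_b2 (mul_mem m4 m4)) (mul_mem m_u m_u)

lemma X4 : τm⁻¹ * (τℓ * τℓ) * τm ∈ H0 := by
  have e : τm⁻¹ * (τℓ * τℓ) * τm =
      (τℓ * τℓ) * ((τℓ⁻¹ * σ * τℓ)⁻¹ * (τℓ⁻¹ * σ * τℓ)⁻¹) * (σ * σ)⁻¹ := by
    rw [show τm⁻¹ * (τℓ * τℓ) * τm = (τm⁻¹ * τℓ * τm) * (τm⁻¹ * τℓ * τm) from by group, q6]
    group
  rw [e]
  exact mul_mem (mul_mem m_a2 (mul_mem (inv_mem m2) (inv_mem m2))) (inv_mem (mul_mem m_u m_u))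

lemma conj_H0 (t : G) (h1 : t * σ * t⁻¹ ∈ H0) (h2 : t * (τℓ * τℓ) * t⁻¹ ∈ H0)
    (h3 : t * (τm * τm) * t⁻¹ ∈ H0) : ∀ x ∈ H0, t * x * t⁻¹ ∈ H0 := by
  intro x hx
  have hle : H0 ≤ Subgroup.comap (MulAut.conj t).toMonoidHom H0 := by
    refine (Subgroup.closure_le _).2 ?_
    rintro y hy
    simp only [Set.mem_insert_iff, Set.mem_singleton_iff] at hy
    rcases hy with rfl | rfl | rfl
    · simpa [Subgroup.mem_comap, MulAut.conj_apply, mul_assoc] using h1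
    · simpa [Subgroup.mem_comap, MulAut.conj_apply, mul_assoc] using h2
    · simpa [Subgroup.mem_comap, MulAut.conj_apply, mul_assoc] using h3
  simpa [Subgroup.mem_comap, MulAut.conj_apply, mul_assoc] using hle hx

lemma conj_ai : ∀ x ∈ H0, τℓ⁻¹ * x * τℓ ∈ H0 := by
  have h := conj_H0 τℓ⁻¹ (by rw [inv_inv]; exact m2)
    (by rw [show τℓ⁻¹ * (τℓ * τℓ) * τℓ⁻¹⁻¹ = τℓ * τℓ from by group]; exact m_a2)
    (by rw [inv_inv]; exact X1)
  intro x hx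
  have := h x hx
  rwa [inv_inv] at this

lemma conj_bi : ∀ x ∈ H0, τm⁻¹ * x * τm ∈ H0 := by
  have h := conj_H0 τm⁻¹ (by rw [inv_inv]; exact m4)
    (by rw [inv_inv]; exact X4)
    (by rw [show τm⁻¹ * (τm * τm) * τm⁻¹⁻¹ = τm * τm from by group]; exact m_b2)
  intro x hx
  have := h x hx
  rwa [inv_inv] at this

lemma X2 : τℓ * (τm * τm) * τℓ⁻¹ ∈ H0 := by
  have hk : ((τℓ * τℓ) * σ⁻¹)⁻¹ * ((τℓ * τℓ) * σ⁻¹)⁻¹ ∈ H0 :=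
    mul_mem (inv_mem (mul_mem m_a2 (inv_mem m_u))) (inv_mem (mul_mem m_a2 (inv_mem m_u)))
  have e : τℓ * (τm * τm) * τℓ⁻¹ =
      (τm * τm) * (τm⁻¹ * (((τℓ * τℓ) * σ⁻¹)⁻¹ * ((τℓ * τℓ) * σ⁻¹)⁻¹) * τm) *
        (((τℓ * τℓ) * σ⁻¹)⁻¹ * ((τℓ * τℓ) * σ⁻¹)⁻¹) := by
    rw [show τℓ * (τm * τm) * τℓ⁻¹ = (τℓ * τm * τℓ⁻¹) * (τℓ * τm * τℓ⁻¹) from by group, e7]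
    group
  rw [e]
  exact mul_mem (mul_mem m_b2 (conj_bi _ hk)) hk

lemma X3 : τm * (τℓ * τℓ) * τm⁻¹ ∈ H0 := by
  have hv : (σ⁻¹ * (τm * τm)⁻¹) * (σ⁻¹ * (τm * τm)⁻¹) ∈ H0 :=
    mul_mem (mul_mem (inv_mem m_u) (inv_mem m_b2)) (mul_mem (inv_mem m_u) (inv_mem m_b2))
  have e : τm * (τℓ * τℓ) * τm⁻¹ =
      (τℓ * τℓ) * (τℓ⁻¹ * ((σ⁻¹ * (τm * τm)⁻¹) * (σ⁻¹ * (τm * τm)⁻¹)) * τℓ) *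
        ((σ⁻¹ * (τm * τm)⁻¹) * (σ⁻¹ * (τm * τm)⁻¹)) := by
    rw [show τm * (τℓ * τℓ) * τm⁻¹ = (τm * τℓ * τm⁻¹) * (τm * τℓ * τm⁻¹) from by group, e8]
    group
  rw [e]
  exact mul_mem (mul_mem m_a2 (conj_ai _ hv)) hv

lemma conj_a : ∀ x ∈ H0, τℓ * x * τℓ⁻¹ ∈ H0 :=
  conj_H0 τℓ m1 (by rw [show τℓ * (τℓ * τℓ) * τℓ⁻¹ = τℓ * τℓ from by group]; exact m_a2) X2

lemma conj_b : ∀ x ∈ H0, τm * x * τm⁻¹ ∈ H0 :=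
  conj_H0 τm m3 X3 (by rw [show τm * (τm * τm) * τm⁻¹ = τm * τm from by group]; exact m_b2)

instance H0_normal : H0.Normal := by
  rw [← Subgroup.normalizer_eq_top_iff, eq_top_iff]
  intro g _
  refine PresentedGroup.generated_by knotRels (Subgroup.normalizer (H0 : Set G)) (fun j => ?_) g
  fin_cases j
  · exact Subgroup.le_normalizer m_u
  · show τℓ ∈ Subgroup.normalizer (H0 : Set G)
    refine Subgroup.mem_normalizer_iff.2 (fun h => ⟨fun hh => conj_a h hh, fun hh => ?_⟩)
    have := conj_ai _ hh
    rwa [show τℓ⁻¹ * (τℓ * h * τℓ⁻¹) * τℓ = h from by group] at this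
  · show τm ∈ Subgroup.normalizer (H0 : Set G)
    refine Subgroup.mem_normalizer_iff.2 (fun h => ⟨fun hh => conj_b h hh, fun hh => ?_⟩)
    have := conj_bi _ hh
    rwa [show τm⁻¹ * (τm * h * τm⁻¹) * τm = h from by group] at this

lemma Hsub_eq_H0 : Hsub = H0 := by
  apply le_antisymm
  · refine (Subgroup.closure_le _).2 ?_
    rintro y hy
    simp only [Set.mem_insert_iff, Set.mem_singleton_iff] at hy
    rcases hy with rfl | rfl | rfl
    · exact m_u
    · show hℓ ∈ H0
      rw [hℓ, show τℓ * σ⁻¹ * τℓ⁻¹ = (τℓ * σ * τℓ⁻¹)⁻¹ from by group, q1]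
      exact inv_mem (mul_mem m_a2 (inv_mem m_u))
    · show hm ∈ H0
      rw [hm, q3]
      exact mul_mem (inv_mem m_u) (inv_mem m_b2)
  · refine (Subgroup.closure_le _).2 ?_
    rintro y hy
    simp only [Set.mem_insert_iff, Set.mem_singleton_iff] at hy
    have hσ : σ ∈ Hsub := Subgroup.subset_closure (by left; rfl)
    have hhℓ : hℓ ∈ Hsub := Subgroup.subset_closure (by right; left; rfl)
    have hhm : hm ∈ Hsub := Subgroup.subset_closure (by right; right; rfl)
    rcases hy with rfl | rfl | rfl
    · exact hσ
    · have e : τℓ * τℓ = hℓ⁻¹ * σ := by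
        rw [hℓ, show (τℓ * σ⁻¹ * τℓ⁻¹)⁻¹ * σ = (τℓ * σ * τℓ⁻¹) * σ from by group, q1]
        group
      rw [e]; exact mul_mem (inv_mem hhℓ) hσ
    · have e : τm * τm = hm⁻¹ * σ⁻¹ := by
        rw [hm, q3]; group; first | rw [pow_two] | rw [zpow_two]
      rw [e]; exact mul_mem (inv_mem hhm) (inv_mem hσ)

def fmap : Fin 3 → Multiplicative (ZMod 2 × ZMod 2) :=
  ![Multiplicative.ofAdd ((0, 0) : ZMod 2 × ZMod 2),
    Multiplicative.ofAdd ((1, 0) : ZMod 2 × ZMod 2),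
    Multiplicative.ofAdd ((0, 1) : ZMod 2 × ZMod 2)]

lemma frels : ∀ r ∈ knotRels, FreeGroup.lift fmap r = 1 := by
  intro r hr
  simp only [knotRels, Set.mem_insert_iff, Set.mem_singleton_iff] at hr
  rcases hr with rfl | rfl | rfl <;>
    · simp only [map_pow, map_mul, map_inv, FreeGroup.lift_apply_of]
      decide

noncomputable def θ0 : G →* Multiplicative (ZMod 2 × ZMod 2) := PresentedGroup.toGroup frels

lemma θ0σ : θ0 σ = Multiplicative.ofAdd ((0, 0) : ZMod 2 × ZMod 2) :=
  PresentedGroup.toGroup.of frels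

lemma θ0τℓ : θ0 τℓ = Multiplicative.ofAdd ((1, 0) : ZMod 2 × ZMod 2) :=
  PresentedGroup.toGroup.of frels

lemma θ0τm : θ0 τm = Multiplicative.ofAdd ((0, 1) : ZMod 2 × ZMod 2) :=
  PresentedGroup.toGroup.of frels

/-- The quotient map. -/
noncomputable def π0 : G →* G ⧸ H0 := QuotientGroup.mk' H0

lemma hπσ : π0 σ = 1 := (QuotientGroup.eq_one_iff σ).2 m_u
lemma hA2 : π0 τℓ * π0 τℓ = 1 := by
  rw [← map_mul]; exact (QuotientGroup.eq_one_iff _).2 m_a2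
lemma hB2 : π0 τm * π0 τm = 1 := by
  rw [← map_mul]; exact (QuotientGroup.eq_one_iff _).2 m_b2
lemma hAB : π0 τℓ * π0 τm = π0 τm * π0 τℓ := by
  have h := congrArg π0 e3
  simp only [map_mul, hπσ, mul_one] at h
  exact h.symm

lemma pow_val_hom {Q : Type*} [Group Q] (A B : Q) (hA : A * A = 1) (hB : B * B = 1)
    (hAB : A * B = B * A) (x1 y1 x2 y2 : ZMod 2) :
    A ^ ((x1 + x2).val) * B ^ ((y1 + y2).val) =
      (A ^ x1.val * B ^ y1.val) * (A ^ x2.val * B ^ y2.val) := by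
  have hA2 : A ^ 2 = 1 := by rw [pow_two]; exact hA
  have hB2 : B ^ 2 = 1 := by rw [pow_two]; exact hB
  have cA : ∀ n, A ^ (n % 2) = A ^ n := by
    intro n
    conv_rhs => rw [← Nat.div_add_mod n 2]
    rw [pow_add, pow_mul, hA2, one_pow, one_mul]
  have cB : ∀ n, B ^ (n % 2) = B ^ n := by
    intro n
    conv_rhs => rw [← Nat.div_add_mod n 2]
    rw [pow_add, pow_mul, hB2, one_pow, one_mul]
  have comm : Commute A B := hAB
  rw [ZMod.val_add, ZMod.val_add, cA, cB, pow_add, pow_add]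
  exact (comm.pow_pow x2.val y1.val).mul_mul_mul_comm _ _

noncomputable def φ0 : Multiplicative (ZMod 2 × ZMod 2) →* G ⧸ H0 :=
  MonoidHom.mk'
    (fun p => (π0 τℓ) ^ ((Multiplicative.toAdd p).1.val) * (π0 τm) ^ ((Multiplicative.toAdd p).2.val))
    (by
      intro p q
      exact pow_val_hom (π0 τℓ) (π0 τm) hA2 hB2 hAB _ _ _ _)

lemma φθ : ∀ g : G, φ0 (θ0 g) = π0 g := by
  have h : φ0.comp θ0 = π0 := by
    refine PresentedGroup.ext (fun x => ?_)
    fin_cases x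
    · show φ0 (θ0 σ) = π0 σ
      rw [θ0σ, hπσ]
      show π0 τℓ ^ (0 : ZMod 2).val * π0 τm ^ (0 : ZMod 2).val = 1
      norm_num
    · show φ0 (θ0 τℓ) = π0 τℓ
      rw [θ0τℓ]
      show π0 τℓ ^ (1 : ZMod 2).val * π0 τm ^ (0 : ZMod 2).val = π0 τℓ
      norm_num [show ((1 : ZMod 2)).val = 1 from rfl]
    · show φ0 (θ0 τm) = π0 τm
      rw [θ0τm]
      show π0 τℓ ^ (0 : ZMod 2).val * π0 τm ^ (1 : ZMod 2).val = π0 τm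
      norm_num [show ((1 : ZMod 2)).val = 1 from rfl]
  intro g
  exact DFunLike.congr_fun h g

lemma H0_le_ker : H0 ≤ θ0.ker := by
  refine (Subgroup.closure_le _).2 ?_
  rintro y hy
  simp only [Set.mem_insert_iff, Set.mem_singleton_iff] at hy
  rcases hy with rfl | rfl | rfl
  · simp only [MonoidHom.mem_ker, SetLike.mem_coe]
    rw [θ0σ]; decide
  · simp only [MonoidHom.mem_ker, SetLike.mem_coe]
    rw [map_mul, θ0τℓ]; decide
  · simp only [MonoidHom.mem_ker, SetLike.mem_coe]
    rw [map_mul, θ0τm]; decide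

/-- There is a unique homomorphism θ : G → ℤ/2 × ℤ/2 with θ(σ) = (0,0),
θ(τℓ) = (1,0), θ(τm) = (0,1), and an element of G lies in H iff it is sent
to the identity, i.e. iff its exponent sums in τℓ and in τm are both even. -/
theorem stmt_1 :
    ∃ θ : G →* Multiplicative (ZMod 2 × ZMod 2),
      (θ σ = Multiplicative.ofAdd ((0, 0) : ZMod 2 × ZMod 2) ∧
       θ τℓ = Multiplicative.ofAdd ((1, 0) : ZMod 2 × ZMod 2) ∧
       θ τm = Multiplicative.ofAdd ((0, 1) : ZMod 2 × ZMod 2)) ∧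
      (∀ θ' : G →* Multiplicative (ZMod 2 × ZMod 2),
        (θ' σ = Multiplicative.ofAdd ((0, 0) : ZMod 2 × ZMod 2) ∧
         θ' τℓ = Multiplicative.ofAdd ((1, 0) : ZMod 2 × ZMod 2) ∧
         θ' τm = Multiplicative.ofAdd ((0, 1) : ZMod 2 × ZMod 2)) → θ' = θ) ∧
      (∀ g : G, g ∈ Hsub ↔ θ g = Multiplicative.ofAdd ((0, 0) : ZMod 2 × ZMod 2)) := by
  refine ⟨θ0, ⟨θ0σ, θ0τℓ, θ0τm⟩, ?_, ?_⟩
  · rintro θ' ⟨h1, h2, h3⟩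
    refine PresentedGroup.ext (fun x => ?_)
    fin_cases x
    · exact h1.trans θ0σ.symm
    · exact h2.trans θ0τℓ.symm
    · exact h3.trans θ0τm.symm
  · intro g
    rw [Hsub_eq_H0]
    constructor
    · intro hg
      have := H0_le_ker hg
      rw [MonoidHom.mem_ker] at this
      rw [this]; decide
    · intro hg
      have h1 : θ0 g = 1 := by rw [hg]; decide
      have h2 : π0 g = 1 := by rw [← φθ, h1, map_one]
      exact (QuotientGroup.eq_one_iff g).1 h2
end

section
/- Let p and q be coprime integers, let ℓ, m be integers and let k be a positive natural number. Let A be the quotient of ℤ × ℤ by the subgroup generated by (q·ℓ + p·m, p), and let x ∈ A denote the class of (1,0). Then there exists an additive group homomorphism φ : A → ZMod k with φ(x) = 1 if and only if the integer gcd(p,k) divides q·ℓ + p·m. -/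
/-- Let `A = (ℤ × ℤ) / ⟨(qℓ + pm, p)⟩` (the first homology of the exterior of a
1-bridge torus knot in `L(p,q)`) and let `x` be the class of `(1,0)` (a meridian).
For `k > 0`, there is an additive homomorphism `φ : A → ℤ/k` with `φ(x) = 1`
iff `gcd(p,k)` divides `qℓ + pm`. -/
theorem stmt_6 (p q ℓ m : ℤ) (hpq : IsCoprime p q) (k : ℕ) (hk : 0 < k) :
    (∃ φ : ((ℤ × ℤ) ⧸ AddSubgroup.closure {((q * ℓ + p * m, p) : ℤ × ℤ)}) →+ ZMod k,
        φ (QuotientAddGroup.mk ((1, 0) : ℤ × ℤ)) = 1) ↔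
      ((Int.gcd p (k : ℤ) : ℤ) ∣ q * ℓ + p * m) := by
  haveI : NeZero k := ⟨hk.ne'⟩
  constructor
  · rintro ⟨φ, hφ⟩
    have hmem : ((q * ℓ + p * m, p) : ℤ × ℤ) ∈
        AddSubgroup.closure {((q * ℓ + p * m, p) : ℤ × ℤ)} := AddSubgroup.subset_closure rfl
    have h0 : φ (QuotientAddGroup.mk ((q * ℓ + p * m, p) : ℤ × ℤ)) = 0 := by
      rw [(QuotientAddGroup.eq_zero_iff _).mpr hmem, map_zero]
    -- decompose
    have hsplit : ((q * ℓ + p * m, p) : ℤ × ℤ)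
        = (q * ℓ + p * m) • ((1, 0) : ℤ × ℤ) + p • ((0, 1) : ℤ × ℤ) := by
      simp [Prod.ext_iff]
    set c := φ (QuotientAddGroup.mk ((0, 1) : ℤ × ℤ)) with hc
    have h1 : ((q * ℓ + p * m : ℤ) : ZMod k) + (p : ZMod k) * c = 0 := by
      have heq : (QuotientAddGroup.mk ((q * ℓ + p * m) • ((1, 0) : ℤ × ℤ) + p • ((0, 1) : ℤ × ℤ))
            : (ℤ × ℤ) ⧸ AddSubgroup.closure {((q * ℓ + p * m, p) : ℤ × ℤ)})
          = QuotientAddGroup.mk ((q * ℓ + p * m, p) : ℤ × ℤ) :=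
        congrArg _ hsplit.symm
      have this : φ ((q * ℓ + p * m) • QuotientAddGroup.mk ((1, 0) : ℤ × ℤ)
            + p • QuotientAddGroup.mk ((0, 1) : ℤ × ℤ)) = 0 := by
        rw [show ((q * ℓ + p * m) • QuotientAddGroup.mk ((1, 0) : ℤ × ℤ)
            + p • QuotientAddGroup.mk ((0, 1) : ℤ × ℤ)
              : (ℤ × ℤ) ⧸ AddSubgroup.closure {((q * ℓ + p * m, p) : ℤ × ℤ)})
          = QuotientAddGroup.mk ((q * ℓ + p * m) • ((1, 0) : ℤ × ℤ) + p • ((0, 1) : ℤ × ℤ))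
          from rfl, heq]
        exact h0
      rw [map_add, map_zsmul, map_zsmul, hφ, ← hc, zsmul_eq_mul, zsmul_eq_mul,
        mul_one] at this
      exact this
    set d : ℤ := (c.val : ℤ) with hd
    have hdc : ((d : ℤ) : ZMod k) = c := by
      simp [hd, ZMod.natCast_val, ZMod.cast_id]
    have h2 : ((q * ℓ + p * m + p * d : ℤ) : ZMod k) = 0 := by
      push_cast [hdc]
      push_cast at h1
      linear_combination h1
    have h3 : (k : ℤ) ∣ q * ℓ + p * m + p * d :=
      (ZMod.intCast_zmod_eq_zero_iff_dvd _ _).mp h2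
    have hgp : (Int.gcd p (k : ℤ) : ℤ) ∣ p := Int.gcd_dvd_left _ _
    have hgk : (Int.gcd p (k : ℤ) : ℤ) ∣ (k : ℤ) := Int.gcd_dvd_right _ _
    have : q * ℓ + p * m = (q * ℓ + p * m + p * d) - p * d := by ring
    rw [this]
    exact dvd_sub (hgk.trans h3) (hgp.mul_right d)
  · rintro ⟨s, hs⟩
    set a := Int.gcdA p (k : ℤ) with ha
    have hbez : (Int.gcd p (k : ℤ) : ℤ) = p * a + (k : ℤ) * Int.gcdB p (k : ℤ) :=
      Int.gcd_eq_gcd_ab p (k : ℤ)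
    set cz : ZMod k := ((-(a * s) : ℤ) : ZMod k) with hcz
    let f : ℤ × ℤ →+ ZMod k :=
    { toFun := fun v => (v.1 : ZMod k) + (v.2 : ZMod k) * cz
      map_zero' := by simp
      map_add' := by intro u v; simp only [Prod.fst_add, Prod.snd_add]; push_cast; ring }
    have hint : q * ℓ + p * m - p * (a * s) = (k : ℤ) * (Int.gcdB p (k : ℤ) * s) := by
      rw [hs, hbez]; ring
    have key : f (q * ℓ + p * m, p) = 0 := by
      show ((q * ℓ + p * m : ℤ) : ZMod k) + (p : ZMod k) * cz = 0
      have : ((q * ℓ + p * m - p * (a * s) : ℤ) : ZMod k) = 0 := by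
        rw [hint]; push_cast; simp
      push_cast at this ⊢
      rw [hcz]; push_cast
      linear_combination this
    have hle : AddSubgroup.closure {((q * ℓ + p * m, p) : ℤ × ℤ)} ≤ f.ker := by
      rw [AddSubgroup.closure_le]
      intro v hv
      rcases hv with rfl
      exact key
    refine ⟨QuotientAddGroup.lift _ f hle, ?_⟩
    show f (1, 0) = 1
    show ((1 : ℤ) : ZMod k) + ((0 : ℤ) : ZMod k) * cz = 1
    simp
end

section
/- Let m ≥ 2 be an even natural number, let a₁, …, a_m, q, p be integers, and define z : ℕ → ℤ by z₀ = q, z₁ = p, and z_{n+1} = 2·a_n·z_n + z_{n−1} for 1 ≤ n ≤ m. For an integer a let L(a) be the 4×4 integer matrix with rows (1,0,0,0), (a,1,−a,0), (0,0,1,0), (−a,0,a,1), and let M(b) be the 4×4 integer matrix with rows (1,b,0,−b), (0,1,0,0), (0,−b,1,b), (0,0,0,1). Let w ∈ ℤ⁴ be the result of applying the product L(a_m)·M(a_{m−1})·L(a_{m−2})·⋯·L(a₂)·M(a₁) (the factor with a_i being L(a_i) for even i and M(a_i) for odd i, multiplied in decreasing order of i) to the column vector (q, p, 0, 0). Then 2·w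 = (z_m + q, z_{m+1} + p, −(z_m − q), −(z_{m+1} − p)). -/
def Lmat (a : ℤ) : Matrix (Fin 4) (Fin 4) ℤ :=
  !![1, 0, 0, 0; a, 1, -a, 0; 0, 0, 1, 0; -a, 0, a, 1]

def Mmat (b : ℤ) : Matrix (Fin 4) (Fin 4) ℤ :=
  !![1, b, 0, -b; 0, 1, 0, 0; 0, -b, 1, b; 0, 0, 0, 1]

def prodMat (a : ℕ → ℤ) (m : ℕ) : Matrix (Fin 4) (Fin 4) ℤ :=
  (((List.range m).reverse.map
    (fun j => if Even (j + 1) then Lmat (a (j + 1)) else Mmat (a (j + 1))))).prod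

open Matrix

/-!
Write a vector as `![A + q, B + p, -(A - q), -(B - p)]`, i.e. by its half-sums `(q, p)` and
half-differences `(A, B)`. Both `M(b)` and `L(c)` fix the half-sums; `M(b)` replaces `A` by
`2bB + A` and `L(c)` replaces `B` by `2cA + B`. Since `2·(q, p, 0, 0)` has half-differences
`(z₀, z₁)`, the factors `M(a₁), L(a₂), M(a₃), …` run the recurrence `z_{n+1} = 2aₙzₙ + z_{n-1}`
alternately in the two slots.
-/

lemma Mmat_mulVec (b q p A B : ℤ) :
    Mmat b *ᵥ ![A + q, B + p, -(A - q), -(B - p)] =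
      ![(2 * b * B + A) + q, B + p, -((2 * b * B + A) - q), -(B - p)] := by
  ext i
  fin_cases i <;> simp [Mmat, Matrix.mulVec, dotProduct, Fin.sum_univ_four] <;> ring

lemma Lmat_mulVec (c q p A B : ℤ) :
    Lmat c *ᵥ ![A + q, B + p, -(A - q), -(B - p)] =
      ![A + q, (2 * c * A + B) + p, -(A - q), -((2 * c * A + B) - p)] := by
  ext i
  fin_cases i <;> simp [Lmat, Matrix.mulVec, dotProduct, Fin.sum_univ_four] <;> ring

lemma prodMat_zero (a : ℕ → ℤ) : prodMat a 0 = 1 := rfl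

lemma prodMat_two_mul_add_two (a : ℕ → ℤ) (k : ℕ) :
    prodMat a (2 * k + 2) = Lmat (a (2 * k + 2)) * Mmat (a (2 * k + 1)) * prodMat a (2 * k) := by
  have hodd : ¬Even (2 * k + 1) := Nat.not_even_iff_odd.mpr (odd_two_mul_add_one k)
  have heven : Even (2 * k + 2) := ⟨k + 1, by ring⟩
  simp [prodMat, List.range_succ, hodd, heven, mul_assoc]

lemma prodMat_two_mul_mulVec (a z : ℕ → ℤ) (q p : ℤ) (m : ℕ)
    (hrec : ∀ n, 1 ≤ n → n ≤ m → z (n + 1) = 2 * a n * z n + z (n - 1))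
    (k : ℕ) (hk : 2 * k ≤ m) :
    prodMat a (2 * k) *ᵥ ![z 0 + q, z 1 + p, -(z 0 - q), -(z 1 - p)] =
      ![z (2 * k) + q, z (2 * k + 1) + p, -(z (2 * k) - q), -(z (2 * k + 1) - p)] := by
  induction k with
  | zero => simp [prodMat_zero]
  | succ k ih =>
    have hz_even : z (2 * k + 2) = 2 * a (2 * k + 1) * z (2 * k + 1) + z (2 * k) :=
      hrec (2 * k + 1) (by omega) (by omega)
    have hz_odd : z (2 * k + 3) = 2 * a (2 * k + 2) * z (2 * k + 2) + z (2 * k + 1) :=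
      hrec (2 * k + 2) (by omega) (by omega)
    rw [show 2 * (k + 1) = 2 * k + 2 by ring, prodMat_two_mul_add_two, ← Matrix.mulVec_mulVec,
      ← Matrix.mulVec_mulVec, ih (by omega), Mmat_mulVec, Lmat_mulVec, ← hz_even, ← hz_odd]

theorem stmt_8_general (m : ℕ) (hme : Even m) (a : ℕ → ℤ) (q p : ℤ)
    (z : ℕ → ℤ) (hz0 : z 0 = q) (hz1 : z 1 = p)
    (hrec : ∀ n, 1 ≤ n → n ≤ m → z (n + 1) = 2 * a n * z n + z (n - 1)) :
    (2 : ℤ) • (prodMat a m).mulVec ![q, p, 0, 0] =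
      ![z m + q, z (m + 1) + p, -(z m - q), -(z (m + 1) - p)] := by
  obtain ⟨k, rfl⟩ := hme
  have hstart : (2 : ℤ) • ![q, p, 0, 0] = ![z 0 + q, z 1 + p, -(z 0 - q), -(z 1 - p)] := by
    ext i
    fin_cases i <;> simp [hz0, hz1, two_mul]
  rw [← Matrix.mulVec_smul, hstart, ← two_mul]
  exact prodMat_two_mul_mulVec a z q p _ hrec k (two_mul k).le

/-- For `m ≥ 2` even, applying `L(a_m)·M(a_{m-1})·…·L(a_2)·M(a_1)` to the column
vector `(q,p,0,0)` yields (twice) the vector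
`((z_m+q)/2, (z_{m+1}+p)/2, -(z_m-q)/2, -(z_{m+1}-p)/2)`, where
`z₀ = q`, `z₁ = p`, `z_{n+1} = 2a_n z_n + z_{n-1}`. -/
theorem stmt_8 (m : ℕ) (hm2 : 2 ≤ m) (hme : Even m) (a : ℕ → ℤ) (q p : ℤ)
    (z : ℕ → ℤ) (hz0 : z 0 = q) (hz1 : z 1 = p)
    (hrec : ∀ n, 1 ≤ n → n ≤ m → z (n + 1) = 2 * a n * z n + z (n - 1)) :
    (2 : ℤ) • (prodMat a m).mulVec ![q, p, 0, 0] =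
      ![z m + q, z (m + 1) + p, -(z m - q), -(z (m + 1) - p)] :=
  stmt_8_general m hme a q p z hz0 hz1 hrec
end

section
/- Let q, p be integers, a : ℕ → ℤ (with values a₁, a₂, …), and define z : ℕ → ℤ by z₀ = q, z₁ = p, and z_{n+1} = 2·a_n·z_n + z_{n−1} for n ≥ 1. For i ∈ {1,2} and m ≥ 1 define F_i(m+1) = Σ_S 2^{(m+1−i)−2|S|} · Π_{k} a_k, where S ranges over all subsets of {i, i+1, …, m−1} in which any two distinct elements differ by at least 2 (including S = ∅), and the product is over all k with i ≤ k ≤ m such that k ∉ S and k−1 ∉ S. Then for every m ≥ 1: z_{m+1} = p·F_1(m+1) + q·F_2(m+1). -/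
/-!
Read `S` as the set of left cells of the dominoes in a tiling of the cells `i, …, m` by
monominoes and dominoes: the summand of `Fcoef a i m` for `S` is the product of `2 * a k` over
the monominoes `k`. Splitting on whether the last cell `n + 2` is a monomino or the right half
of a domino gives `F(n + 2) = 2 a_{n+2} F(n + 1) + F(n)`, the recurrence of `z`; the initial
values `F_1(1) = 2 a_1`, `F_2(1) = 1`, `F_2(2) = 2 a_2` then match `z 2` and `z 3`.
-/

open Finset in
/-- `Fcoef a i m` is `z^{(i)}_{m+1}`: the sum over all subsets `S` of
`{i, …, m-1}` in which any two distinct elements differ by at least `2`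
(including `S = ∅`) of `2^{(m+1-i) - 2|S|}` times the product of the `a_k`
over all `i ≤ k ≤ m` with `k ∉ S` and `k - 1 ∉ S`. -/
def Fcoef (a : ℕ → ℤ) (i m : ℕ) : ℤ :=
  ∑ S ∈ (Finset.Icc i (m - 1)).powerset.filter
      (fun S => ∀ x ∈ S, ∀ y ∈ S, x < y → x + 2 ≤ y),
    (2 : ℤ) ^ ((m + 1 - i) - 2 * S.card) *
      ∏ k ∈ (Finset.Icc i m).filter (fun k => k ∉ S ∧ k - 1 ∉ S), a k

open Finset

def sparseSubsets (s : Finset ℕ) : Finset (Finset ℕ) :=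
  s.powerset.filter (fun S => ∀ x ∈ S, ∀ y ∈ S, x < y → x + 2 ≤ y)

lemma mem_sparseSubsets {s S : Finset ℕ} :
    S ∈ sparseSubsets s ↔ S ⊆ s ∧ ∀ x ∈ S, ∀ y ∈ S, x < y → x + 2 ≤ y := by
  rw [sparseSubsets, mem_filter, mem_powerset]

def tilingWeight (a : ℕ → ℤ) (i m : ℕ) (S : Finset ℕ) : ℤ :=
  2 ^ ((m + 1 - i) - 2 * #S) * ∏ k ∈ (Icc i m).filter (fun k => k ∉ S ∧ k - 1 ∉ S), a k

lemma Fcoef_eq_sum_tilingWeight (a : ℕ → ℤ) (i m : ℕ) :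
    Fcoef a i m = ∑ S ∈ sparseSubsets (Icc i (m - 1)), tilingWeight a i m S :=
  rfl

lemma sparseSubsets_filter_notMem (s : Finset ℕ) (b : ℕ) :
    (sparseSubsets s).filter (b ∉ ·) = sparseSubsets (s.erase b) := by
  ext S
  simp only [mem_filter, mem_sparseSubsets, subset_erase]
  tauto

lemma sparseSubsets_filter_mem {s : Finset ℕ} {b : ℕ} (hbs : b ∈ s) (hb : ∀ x ∈ s, x ≤ b) :
    (sparseSubsets s).filter (b ∈ ·) =
      (sparseSubsets ((s.erase b).filter (· + 2 ≤ b))).image (insert b) := by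
  ext S
  simp only [mem_filter, mem_image, mem_sparseSubsets]
  constructor
  · rintro ⟨⟨hSs, hsparse⟩, hbS⟩
    refine ⟨S.erase b, ⟨fun x hx => ?_, fun x hx y hy => hsparse x (mem_of_mem_erase hx) y
      (mem_of_mem_erase hy)⟩, insert_erase hbS⟩
    obtain ⟨hxb, hxS⟩ := mem_erase.mp hx
    have := hsparse x hxS b hbS (lt_of_le_of_ne (hb x (hSs hxS)) hxb)
    simp only [mem_filter, mem_erase]
    exact ⟨⟨hxb, hSs hxS⟩, this⟩
  · rintro ⟨T, ⟨hTs, hsparse⟩, rfl⟩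
    have hT : ∀ x ∈ T, x + 2 ≤ b := fun x hx => (mem_filter.mp (hTs hx)).2
    refine ⟨⟨insert_subset hbs fun x hx => mem_of_mem_erase (mem_filter.mp (hTs hx)).1,
      fun x hx y hy hxy => ?_⟩, mem_insert_self b T⟩
    rcases mem_insert.mp hx with rfl | hxT <;> rcases mem_insert.mp hy with rfl | hyT
    · omega
    · have := hT y hyT; omega
    · exact hT x hxT
    · exact hsparse x hxT y hyT hxy

-- A sparse set and its translate by one are disjoint subsets of `Icc i (n + 1)`.
lemma two_mul_card_le_of_sparse {S : Finset ℕ} {i n : ℕ} (hS : S ⊆ Icc i n)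
    (hsparse : ∀ x ∈ S, ∀ y ∈ S, x < y → x + 2 ≤ y) : 2 * #S ≤ n + 2 - i := by
  have hdisj : Disjoint S (S.map (addRightEmbedding 1)) := by
    rw [disjoint_left]
    intro x hx hx'
    obtain ⟨y, hy, rfl⟩ := mem_map.mp hx'
    have := hsparse y hy (y + 1) hx (by omega)
    simp at this
  have hsub : S ∪ S.map (addRightEmbedding 1) ⊆ Icc i (n + 1) := by
    intro x hx
    rcases mem_union.mp hx with hx | hx
    · have := mem_Icc.mp (hS hx); simp only [mem_Icc]; omega
    · obtain ⟨y, hy, rfl⟩ := mem_map.mp hx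
      have := mem_Icc.mp (hS hy); simp only [mem_Icc, addRightEmbedding_apply]; omega
  have := card_le_card hsub
  rw [card_union_of_disjoint hdisj, card_map, Nat.card_Icc] at this
  omega

lemma filter_Icc_add_one_of_notMem {S : Finset ℕ} {i m : ℕ} (him : i ≤ m + 1) (hm : m ∉ S)
    (hm1 : m + 1 ∉ S) :
    (Icc i (m + 1)).filter (fun k => k ∉ S ∧ k - 1 ∉ S) =
      insert (m + 1) ((Icc i m).filter (fun k => k ∉ S ∧ k - 1 ∉ S)) := by
  ext k
  simp only [mem_filter, mem_Icc, mem_insert]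
  constructor
  · rintro ⟨⟨hik, hkm⟩, hk⟩
    rcases Nat.lt_or_eq_of_le hkm with hlt | rfl
    · exact Or.inr ⟨⟨hik, by omega⟩, hk⟩
    · exact Or.inl rfl
  · rintro (rfl | ⟨⟨hik, hkm⟩, hk⟩)
    · exact ⟨⟨him, le_rfl⟩, hm1, hm⟩
    · exact ⟨⟨hik, by omega⟩, hk⟩

lemma filter_Icc_add_two_insert (T : Finset ℕ) (i n : ℕ) :
    (Icc i (n + 2)).filter (fun k => k ∉ insert (n + 1) T ∧ k - 1 ∉ insert (n + 1) T) =
      (Icc i n).filter (fun k => k ∉ T ∧ k - 1 ∉ T) := by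
  ext k
  simp only [mem_filter, mem_Icc, mem_insert, not_or]
  constructor
  · rintro ⟨⟨hik, hkn⟩, ⟨hk1, hkT⟩, hk2, hk1T⟩
    exact ⟨⟨hik, by omega⟩, hkT, hk1T⟩
  · rintro ⟨⟨hik, hkn⟩, hkT, hk1T⟩
    exact ⟨⟨hik, by omega⟩, ⟨by omega, hkT⟩, by omega, hk1T⟩

lemma tilingWeight_add_two {a : ℕ → ℤ} {S : Finset ℕ} {i n : ℕ} (hin : i ≤ n + 1)
    (hS : S ∈ sparseSubsets (Icc i n)) :
    tilingWeight a i (n + 2) S = 2 * a (n + 2) * tilingWeight a i (n + 1) S := by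
  obtain ⟨hSsub, hsparse⟩ := mem_sparseSubsets.mp hS
  have hcard := two_mul_card_le_of_sparse hSsub hsparse
  have hnotMem : ∀ k, n < k → k ∉ S := fun k hk hkS => by
    have := mem_Icc.mp (hSsub hkS); omega
  rw [tilingWeight, tilingWeight,
    filter_Icc_add_one_of_notMem (by omega) (hnotMem _ (by omega)) (hnotMem _ (by omega)),
    prod_insert (by simp), show n + 2 + 1 - i - 2 * #S = (n + 1 + 1 - i - 2 * #S) + 1 by omega,
    pow_succ]
  ring

lemma tilingWeight_add_two_insert (a : ℕ → ℤ) {T : Finset ℕ} {i n : ℕ} (hT : n + 1 ∉ T) :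
    tilingWeight a i (n + 2) (insert (n + 1) T) = tilingWeight a i n T := by
  rw [tilingWeight, tilingWeight, filter_Icc_add_two_insert, card_insert_of_notMem hT,
    show n + 2 + 1 - i - 2 * (#T + 1) = n + 1 - i - 2 * #T by omega]

theorem Fcoef_add_two (a : ℕ → ℤ) {i n : ℕ} (hi : 1 ≤ i) (hin : i ≤ n + 1) :
    Fcoef a i (n + 2) = 2 * a (n + 2) * Fcoef a i (n + 1) + Fcoef a i n := by
  have hdomino : ((Icc i (n + 1)).erase (n + 1)).filter (· + 2 ≤ n + 1) = Icc i (n - 1) := by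
    ext k; simp only [mem_filter, mem_erase, mem_Icc]; omega
  have hinj : Set.InjOn (insert (n + 1)) (sparseSubsets (Icc i (n - 1)) : Set (Finset ℕ)) := by
    intro T hT T' hT' h
    have hnotMem : ∀ U ∈ sparseSubsets (Icc i (n - 1)), n + 1 ∉ U := fun U hU hU' => by
      have := mem_Icc.mp ((mem_sparseSubsets.mp hU).1 hU'); omega
    rw [← erase_insert (hnotMem T hT), ← erase_insert (hnotMem T' hT')]
    exact congrArg (·.erase (n + 1)) h
  rw [Fcoef_eq_sum_tilingWeight, Fcoef_eq_sum_tilingWeight, Fcoef_eq_sum_tilingWeight,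
    show n + 2 - 1 = n + 1 from rfl, show n + 1 - 1 = n from rfl,
    ← sum_filter_add_sum_filter_not _ (n + 1 ∈ ·), sparseSubsets_filter_mem (by simpa) (by simp),
    sparseSubsets_filter_notMem, hdomino, sum_image hinj, Icc_erase_right,
    Ico_add_one_right_eq_Icc, mul_sum, add_comm]
  congr 1
  · exact sum_congr rfl fun S hS => tilingWeight_add_two hin hS
  · refine sum_congr rfl fun T hT => tilingWeight_add_two_insert a fun hT' => ?_
    have := mem_Icc.mp ((mem_sparseSubsets.mp hT).1 hT'); omega

lemma Fcoef_succ_self (a : ℕ → ℤ) (n : ℕ) : Fcoef a (n + 1) n = 1 := by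
  simp [Fcoef_eq_sum_tilingWeight, tilingWeight, sparseSubsets, Icc_eq_empty_of_lt,
    filter_singleton]

lemma Fcoef_self (a : ℕ → ℤ) (n : ℕ) : Fcoef a (n + 1) (n + 1) = 2 * a (n + 1) := by
  simp [Fcoef_eq_sum_tilingWeight, tilingWeight, sparseSubsets, Icc_eq_empty_of_lt,
    filter_singleton]

theorem eq_of_second_order_recurrence {R : Type*} {u v : ℕ → R} (f : ℕ → R → R → R)
    (h0 : u 0 = v 0) (h1 : u 1 = v 1) (hu : ∀ n, u (n + 2) = f n (u (n + 1)) (u n))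
    (hv : ∀ n, v (n + 2) = f n (v (n + 1)) (v n)) : u = v := by
  funext n
  induction n using Nat.twoStepInduction with
  | zero => exact h0
  | one => exact h1
  | more n ih ih' => rw [hu, hv, ih, ih']

/-- Closed form for the recurrence `z_{n+1} = 2a_n z_n + z_{n-1}`, `z₀ = q`,
`z₁ = p`: for every `m ≥ 1`, `z_{m+1} = p·z^{(1)}_{m+1} + q·z^{(2)}_{m+1}`. -/
theorem stmt_10 (q p : ℤ) (a : ℕ → ℤ) (z : ℕ → ℤ)
    (hz0 : z 0 = q) (hz1 : z 1 = p)
    (hrec : ∀ n, 1 ≤ n → z (n + 1) = 2 * a n * z n + z (n - 1)) :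
    ∀ m, 1 ≤ m → z (m + 1) = p * Fcoef a 1 m + q * Fcoef a 2 m := by
  set G : ℕ → ℤ := fun m => p * Fcoef a 1 m + q * Fcoef a 2 m
  have hz2 : z 2 = 2 * a 1 * p + q := by rw [hrec 1 le_rfl, hz1, hz0]
  have hz3 : z 3 = 2 * a 2 * z 2 + p := by rw [hrec 2 (by norm_num), ← hz1]
  have hF12 : Fcoef a 1 2 = 2 * a 2 * (2 * a 1) + 1 := by
    rw [Fcoef_add_two a le_rfl le_rfl, Fcoef_self a 0, Fcoef_succ_self a 0]
  have hsol : (fun n => z (n + 2)) = fun n => G (n + 1) := by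
    refine eq_of_second_order_recurrence (fun n x y => 2 * a (n + 3) * x + y) ?_ ?_
      (fun n => hrec (n + 3) (by omega)) fun n => ?_
    · simp only [G, hz2, Fcoef_self a 0, Fcoef_succ_self a 1]; ring
    · simp only [G, hz3, hz2, hF12, Fcoef_self a 1]; ring
    · simp only [G, Fcoef_add_two a le_rfl (by omega : 1 ≤ n + 2),
        Fcoef_add_two a (by omega : 1 ≤ 2) (by omega : 2 ≤ n + 2)]
      ring
  intro m hm
  obtain ⟨n, rfl⟩ := Nat.exists_eq_add_of_le' hm
  exact congrFun hsol n
end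

section
/- Let m ≥ 2 be an even natural number, let a₁, …, a_m be integers, and suppose either a_i ≥ 1 for all 1 ≤ i ≤ m or a_i ≤ −1 for all 1 ≤ i ≤ m. Define z : ℕ → ℤ by z₀ = 0, z₁ = 1, and z_{n+1} = 2·a_n·z_n + z_{n−1} for 1 ≤ n ≤ m. Then |z_{m+1}| > 2^m · Π_{i=1}^m |a_i|; in particular |z_{m+1}| > 1. -/
/-!
For positive coefficients every `z n` is nonnegative, so the recurrence gives
`z (k + 1) ≥ 2 a_k z_k ≥ 2^k a₁⋯a_k` by induction; the bound becomes strict at `k = m ≥ 2`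
because the neglected term `z (m - 1)` is then at least `1`. Negative coefficients reduce to
positive ones: if `z` solves the recurrence for `a`, then `n ↦ (-1)^(n+1) z n` solves it for `-a`.
-/

def SolvesRecurrence (m : ℕ) (a z : ℕ → ℤ) : Prop :=
  ∀ n, 1 ≤ n → n ≤ m → z (n + 1) = 2 * a n * z n + z (n - 1)

namespace SolvesRecurrence

variable {m : ℕ} {a z : ℕ → ℤ}

theorem neg (h : SolvesRecurrence m a z) :
    SolvesRecurrence m (-a) (fun n => (-1) ^ (n + 1) * z n) := by
  intro n hn hnm
  obtain ⟨k, rfl⟩ : ∃ k, n = k + 1 := ⟨n - 1, by omega⟩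
  simp only [Pi.neg_apply, Nat.add_sub_cancel, h (k + 1) hn hnm]
  ring

theorem one_le_prod_Icc (ha : ∀ i, 1 ≤ i → i ≤ m → 1 ≤ a i) {k : ℕ} (hk : k ≤ m) :
    1 ≤ ∏ i ∈ Finset.Icc 1 k, a i :=
  Finset.one_le_prod fun i hi => ha i (Finset.mem_Icc.1 hi).1 ((Finset.mem_Icc.1 hi).2.trans hk)

theorem pow_mul_prod_le (h : SolvesRecurrence m a z) (ha : ∀ i, 1 ≤ i → i ≤ m → 1 ≤ a i)
    (hz0 : z 0 = 0) (hz1 : z 1 = 1) :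
    ∀ k ≤ m, 0 ≤ z k ∧ 2 ^ k * ∏ i ∈ Finset.Icc 1 k, a i ≤ z (k + 1) := by
  intro k
  induction k with
  | zero => simp [hz0, hz1]
  | succ k ih =>
    intro hk
    obtain ⟨hzk, hbound⟩ := ih (by omega)
    have hprod := one_le_prod_Icc ha (k := k) (by omega)
    have hak : 1 ≤ a (k + 1) := ha (k + 1) (by omega) hk
    have hzk1 : 0 ≤ z (k + 1) := le_trans (mul_nonneg (by positivity) (by omega)) hbound
    refine ⟨hzk1, ?_⟩
    calc 2 ^ (k + 1) * ∏ i ∈ Finset.Icc 1 (k + 1), a i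
        = 2 * a (k + 1) * (2 ^ k * ∏ i ∈ Finset.Icc 1 k, a i) := by
          rw [Finset.prod_Icc_succ_top (by omega), pow_succ]; ring
      _ ≤ 2 * a (k + 1) * z (k + 1) := by gcongr
      _ ≤ z (k + 1 + 1) := by rw [h (k + 1) (by omega) hk, Nat.add_sub_cancel]; omega

theorem pow_mul_prod_lt (h : SolvesRecurrence m a z) (ha : ∀ i, 1 ≤ i → i ≤ m → 1 ≤ a i)
    (hz0 : z 0 = 0) (hz1 : z 1 = 1) (hm : 2 ≤ m) :
    2 ^ m * ∏ i ∈ Finset.Icc 1 m, a i < z (m + 1) := by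
  obtain ⟨n, rfl⟩ : ∃ n, m = n + 2 := ⟨m - 2, by omega⟩
  have hz_prev : 1 ≤ z (n + 1) := calc
    1 ≤ 2 ^ n * ∏ i ∈ Finset.Icc 1 n, a i :=
      one_le_mul_of_one_le_of_one_le (one_le_pow₀ one_le_two) (one_le_prod_Icc ha (by omega))
    _ ≤ z (n + 1) := (h.pow_mul_prod_le ha hz0 hz1 n (by omega)).2
  have hbound := (h.pow_mul_prod_le ha hz0 hz1 (n + 1) (by omega)).2
  have ham : 1 ≤ a (n + 2) := ha (n + 2) (by omega) le_rfl
  calc 2 ^ (n + 2) * ∏ i ∈ Finset.Icc 1 (n + 2), a i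
      = 2 * a (n + 2) * (2 ^ (n + 1) * ∏ i ∈ Finset.Icc 1 (n + 1), a i) := by
        rw [Finset.prod_Icc_succ_top (by omega), pow_succ]; ring
    _ ≤ 2 * a (n + 2) * z (n + 2) := by gcongr
    _ < z (n + 2 + 1) := by
      rw [h (n + 2) (by omega) le_rfl, show n + 2 - 1 = n + 1 from rfl]; omega

theorem pow_mul_prod_abs_lt_of_pos (h : SolvesRecurrence m a z)
    (ha : ∀ i, 1 ≤ i → i ≤ m → 1 ≤ a i) (hz0 : z 0 = 0) (hz1 : z 1 = 1) (hm : 2 ≤ m) :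
    2 ^ m * ∏ i ∈ Finset.Icc 1 m, |a i| < |z (m + 1)| := calc
  2 ^ m * ∏ i ∈ Finset.Icc 1 m, |a i| = 2 ^ m * ∏ i ∈ Finset.Icc 1 m, a i := by
    rw [Finset.prod_congr rfl fun i hi =>
      abs_of_pos (ha i (Finset.mem_Icc.1 hi).1 (Finset.mem_Icc.1 hi).2)]
  _ < z (m + 1) := h.pow_mul_prod_lt ha hz0 hz1 hm
  _ ≤ |z (m + 1)| := le_abs_self _

theorem pow_mul_prod_abs_lt (h : SolvesRecurrence m a z)
    (ha : (∀ i, 1 ≤ i → i ≤ m → 1 ≤ a i) ∨ (∀ i, 1 ≤ i → i ≤ m → a i ≤ -1))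
    (hz0 : z 0 = 0) (hz1 : z 1 = 1) (hm : 2 ≤ m) :
    2 ^ m * ∏ i ∈ Finset.Icc 1 m, |a i| < |z (m + 1)| := by
  rcases ha with hpos | hneg
  · exact h.pow_mul_prod_abs_lt_of_pos hpos hz0 hz1 hm
  · simpa [abs_mul] using h.neg.pow_mul_prod_abs_lt_of_pos
      (fun i h1 h2 => le_neg_of_le_neg (hneg i h1 h2)) (by simp [hz0]) (by simp [hz1]) hm

end SolvesRecurrence

theorem stmt_13_general (m : ℕ) (hm2 : 2 ≤ m) (a : ℕ → ℤ)
    (ha : (∀ i, 1 ≤ i → i ≤ m → 1 ≤ a i) ∨ (∀ i, 1 ≤ i → i ≤ m → a i ≤ -1))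
    (z : ℕ → ℤ) (hz0 : z 0 = 0) (hz1 : z 1 = 1)
    (hrec : ∀ n, 1 ≤ n → n ≤ m → z (n + 1) = 2 * a n * z n + z (n - 1)) :
    2 ^ m * ∏ i ∈ Finset.Icc 1 m, |a i| < |z (m + 1)| ∧ 1 < |z (m + 1)| := by
  have hlt := SolvesRecurrence.pow_mul_prod_abs_lt hrec ha hz0 hz1 hm2
  have ha_ne : ∀ i ∈ Finset.Icc 1 m, a i ≠ 0 := fun i hi => by
    rw [Finset.mem_Icc] at hi
    rcases ha with h | h <;> linarith [h i hi.1 hi.2]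
  refine ⟨hlt, lt_of_le_of_lt ?_ hlt⟩
  exact one_le_mul_of_one_le_of_one_le (one_le_pow₀ one_le_two)
    (Finset.one_le_prod fun i hi => Int.one_le_abs (ha_ne i hi))

/-- If `m ≥ 2` is even and the integers `a₁, …, a_m` are all `≥ 1` or all
`≤ -1`, then the solution of `z_{n+1} = 2a_n z_n + z_{n-1}`, `z₀ = 0`, `z₁ = 1`
satisfies `|z_{m+1}| > 2^m·|a₁|⋯|a_m| > 1`; in particular the corresponding
1-bridge torus knot is nontrivial. -/
theorem stmt_13 (m : ℕ) (hm2 : 2 ≤ m) (hme : Even m) (a : ℕ → ℤ)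
    (ha : (∀ i, 1 ≤ i → i ≤ m → 1 ≤ a i) ∨ (∀ i, 1 ≤ i → i ≤ m → a i ≤ -1))
    (z : ℕ → ℤ) (hz0 : z 0 = 0) (hz1 : z 1 = 1)
    (hrec : ∀ n, 1 ≤ n → n ≤ m → z (n + 1) = 2 * a n * z n + z (n - 1)) :
    2 ^ m * ∏ i ∈ Finset.Icc 1 m, |a i| < |z (m + 1)| ∧ 1 < |z (m + 1)| :=
  stmt_13_general m hm2 a ha z hz0 hz1 hrec
end
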